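/- Let (γ,v₁,v₂) be a pseudo-spherical spacelike framed curve on I with ⟨v₁,v₁⟩ = ε and curvature (α,ℓ,m,n), and let v₀ ∈ AdS³, s₀ ∈ I. Then d_{v₀}(s₀) = d′_{v₀}(s₀) = 0 if and only if there exist a, b, c ∈ ℝ with v₀ = γ(s₀) + a v₁(s₀) + b v₂(s₀) + c μ(s₀) and c² = −ε(a² − b²), and in addition either α(s₀) = 0 or there exist λ ∈ ℝ and a choice of sign ± with v₀ = γ(s₀) + λ(v₁(s₀) ± v₂(s₀)). -/

import Mathlib

noncomputable section

/-- ℝ⁴ as `Fin 4 → ℝ`, carrying the pseudo-scalar product of index 2. -/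
abbrev R4 : Type := Fin 4 → ℝ

/-- ℝ³ as `Fin 3 → ℝ`. -/
abbrev R3 : Type := Fin 3 → ℝ

/-- The pseudo-scalar product ⟨u,w⟩ = −u₁w₁ − u₂w₂ + u₃w₃ + u₄w₄ of ℝ⁴₂. -/
def pip (u w : R4) : ℝ :=
  -(u 0 * w 0) - u 1 * w 1 + u 2 * w 2 + u 3 * w 3

/-- The anti-de Sitter 3-space AdS³ = {u : ⟨u,u⟩ = −1}. -/
def AdS3 : Set R4 := {u | pip u u = -1}

/-- The 3×3 minor of the rows u,v,w using columns a,b,c. -/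
def minor3 (u v w : R4) (a b c : Fin 4) : ℝ :=
  u a * (v b * w c - v c * w b) - u b * (v a * w c - v c * w a)
    + u c * (v a * w b - v b * w a)

/-- The triple product u×v×w in ℝ⁴₂, the formal determinant with first row
(−e₁,−e₂,e₃,e₄). -/
def trip (u v w : R4) : R4 :=
  ![-(minor3 u v w 1 2 3), minor3 u v w 0 2 3, minor3 u v w 0 1 3,
    -(minor3 u v w 0 1 2)]

/-- A pseudo-spherical spacelike framed curve on `I` with sign `ε`. -/
structure IsFramedCurve (I : Set ℝ) (γ v₁ v₂ : ℝ → R4) (ε : ℝ) : Prop where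
  eps : ε = 1 ∨ ε = -1
  smooth_γ : ContDiffOn ℝ (⊤ : ℕ∞) γ I
  smooth_v₁ : ContDiffOn ℝ (⊤ : ℕ∞) v₁ I
  smooth_v₂ : ContDiffOn ℝ (⊤ : ℕ∞) v₂ I
  mem_ads : ∀ s ∈ I, γ s ∈ AdS3
  norm_v₁ : ∀ s ∈ I, pip (v₁ s) (v₁ s) = ε
  norm_v₂ : ∀ s ∈ I, pip (v₂ s) (v₂ s) = -ε
  orth_v₁v₂ : ∀ s ∈ I, pip (v₁ s) (v₂ s) = 0
  orth_γv₁ : ∀ s ∈ I, pip (γ s) (v₁ s) = 0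
  orth_γv₂ : ∀ s ∈ I, pip (γ s) (v₂ s) = 0
  tang_v₁ : ∀ s ∈ I, pip (deriv γ s) (v₁ s) = 0
  tang_v₂ : ∀ s ∈ I, pip (deriv γ s) (v₂ s) = 0

/-- μ(s) = γ(s)×v₁(s)×v₂(s). -/
def muF (γ v₁ v₂ : ℝ → R4) (s : ℝ) : R4 := trip (γ s) (v₁ s) (v₂ s)

/-- α(s) = ⟨γ′(s), μ(s)⟩. -/
def curvA (γ v₁ v₂ : ℝ → R4) (s : ℝ) : ℝ := pip (deriv γ s) (muF γ v₁ v₂ s)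

/-- ℓ(s) = −ε⟨v₁′(s), v₂(s)⟩. -/
def curvL (ε : ℝ) (v₁ v₂ : ℝ → R4) (s : ℝ) : ℝ := -ε * pip (deriv v₁ s) (v₂ s)

/-- m(s) = ⟨v₁′(s), μ(s)⟩. -/
def curvM (γ v₁ v₂ : ℝ → R4) (s : ℝ) : ℝ := pip (deriv v₁ s) (muF γ v₁ v₂ s)

/-- n(s) = ⟨v₂′(s), μ(s)⟩. -/
def curvN (γ v₁ v₂ : ℝ → R4) (s : ℝ) : ℝ := pip (deriv v₂ s) (muF γ v₁ v₂ s)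

/-- The nullcone front NF±(s,λ) = γ(s) + λ(v₁(s) ± v₂(s)), with sign `e = ±1`. -/
def NF (γ v₁ v₂ : ℝ → R4) (e : ℝ) (q : ℝ × ℝ) : R4 :=
  γ q.1 + q.2 • (v₁ q.1 + e • v₂ q.1)

/-- The function σ± of Theorem 4.3, with sign `e = ±1`. -/
def sigmaF (γ v₁ v₂ : ℝ → R4) (ε e : ℝ) (s : ℝ) : ℝ :=
  curvA γ v₁ v₂ s *
      (-(deriv (curvM γ v₁ v₂) s + e * deriv (curvN γ v₁ v₂) s)
        + curvL ε v₁ v₂ s * (curvN γ v₁ v₂ s + e * curvM γ v₁ v₂ s))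
    + deriv (curvA γ v₁ v₂) s * (curvM γ v₁ v₂ s + e * curvN γ v₁ v₂ s)

/-- A point is a singular point of `f : ℝ×ℝ → ℝ⁴₂` when the two partial
derivatives are linearly dependent (the differential has rank < 2). -/
def SingularAt (f : ℝ × ℝ → R4) (q : ℝ × ℝ) : Prop :=
  ¬ LinearIndependent ℝ
      ![deriv (fun t => f (t, q.2)) q.1, deriv (fun l => f (q.1, l)) q.2]

/-- The cuspidal edge model CE(u,v) = (u², u³, v). -/
def CE : ℝ × ℝ → R3 := fun q => ![q.1 ^ 2, q.1 ^ 3, q.2]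

/-- The swallowtail model SW(u,v) = (3u⁴+u²v, 4u³+2uv, v). -/
def SW : ℝ × ℝ → R3 :=
  fun q => ![3 * q.1 ^ 4 + q.1 ^ 2 * q.2, 4 * q.1 ^ 3 + 2 * q.1 * q.2, q.2]

/-- `f` (a map into AdS³) is locally diffeomorphic at `p` to the model `g` at `0`:
there are a smooth diffeomorphism `φ` from a neighborhood `U` of `0` in ℝ² onto a
neighborhood `V` of `p` with `φ 0 = p`, and a smooth diffeomorphism `Ψ` from a
neighborhood `W` of `f p` in the submanifold AdS³ onto an open set `W'` of ℝ³
with `Ψ (f p) = g 0`, such that `Ψ ∘ f ∘ φ = g` near `0`. -/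
def LocallyDiffeoAt (f : ℝ × ℝ → R4) (p : ℝ × ℝ) (g : ℝ × ℝ → R3) : Prop :=
  ∃ (U V : Set (ℝ × ℝ)) (φ φinv : ℝ × ℝ → ℝ × ℝ)
    (W : Set R4) (W' : Set R3) (Ψ : R4 → R3) (Ψinv : R3 → R4),
    IsOpen U ∧ (0 : ℝ × ℝ) ∈ U ∧ IsOpen V ∧ p ∈ V ∧
    ContDiffOn ℝ (⊤ : ℕ∞) φ U ∧ Set.BijOn φ U V ∧ φ 0 = p ∧
    ContDiffOn ℝ (⊤ : ℕ∞) φinv V ∧ (∀ x ∈ U, φinv (φ x) = x) ∧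
    (∃ O : Set R4, IsOpen O ∧ W = O ∩ AdS3) ∧ f p ∈ W ∧ IsOpen W' ∧
    ContDiffOn ℝ (⊤ : ℕ∞) Ψ W ∧ Set.BijOn Ψ W W' ∧ Ψ (f p) = g 0 ∧
    ContDiffOn ℝ (⊤ : ℕ∞) Ψinv W' ∧ (∀ y ∈ W, Ψinv (Ψ y) = y) ∧
    (∀ x ∈ U, f (φ x) ∈ W) ∧ (∀ x ∈ U, Ψ (f (φ x)) = g x)

/-- The anti-de Sitter distance-squared function d_{v₀}(s) = ⟨γ(s)−v₀, γ(s)−v₀⟩. -/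
def dSq (γ : ℝ → R4) (v₀ : R4) (s : ℝ) : ℝ := pip (γ s - v₀) (γ s - v₀)



section AuxLemmas

lemma pip_comm (u v : R4) : pip u v = pip v u := by unfold pip; ring

lemma pip_add_left (x y z : R4) : pip (x + y) z = pip x z + pip y z := by
  simp only [pip, Pi.add_apply]; ring

lemma pip_add_right (z x y : R4) : pip z (x + y) = pip z x + pip z y := by
  simp only [pip, Pi.add_apply]; ring

lemma pip_sub_left (x y z : R4) : pip (x - y) z = pip x z - pip y z := by
  simp only [pip, Pi.sub_apply]; ring

lemma pip_sub_right (z x y : R4) : pip z (x - y) = pip z x - pip z y := by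
  simp only [pip, Pi.sub_apply]; ring

lemma pip_smul_left (a : ℝ) (x z : R4) : pip (a • x) z = a * pip x z := by
  simp only [pip, Pi.smul_apply, smul_eq_mul]; ring

lemma pip_smul_right (a : ℝ) (z x : R4) : pip z (a • x) = a * pip z x := by
  simp only [pip, Pi.smul_apply, smul_eq_mul]; ring

lemma pip_neg_left (x z : R4) : pip (-x) z = -pip x z := by
  simp only [pip, Pi.neg_apply]; ring

lemma pip_neg_right (z x : R4) : pip z (-x) = -pip z x := by
  simp only [pip, Pi.neg_apply]; ring

lemma trip_zero (u v w : R4) : trip u v w 0 = -(minor3 u v w 1 2 3) := rfl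
lemma trip_one (u v w : R4) : trip u v w 1 = minor3 u v w 0 2 3 := rfl
lemma trip_two (u v w : R4) : trip u v w 2 = minor3 u v w 0 1 3 := rfl
lemma trip_three (u v w : R4) : trip u v w 3 = -(minor3 u v w 0 1 2) := rfl

lemma pip_trip_fst (u v w : R4) : pip (trip u v w) u = 0 := by
  simp only [pip, trip_zero, trip_one, trip_two, trip_three, minor3]; ring

lemma pip_trip_snd (u v w : R4) : pip (trip u v w) v = 0 := by
  simp only [pip, trip_zero, trip_one, trip_two, trip_three, minor3]; ring

lemma pip_trip_thd (u v w : R4) : pip (trip u v w) w = 0 := by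
  simp only [pip, trip_zero, trip_one, trip_two, trip_three, minor3]; ring

lemma pip_trip_self (u v w : R4) :
    pip (trip u v w) (trip u v w) =
      pip u u * (pip v v * pip w w - pip v w * pip v w)
        - pip u v * (pip u v * pip w w - pip v w * pip u w)
        + pip u w * (pip u v * pip v w - pip v v * pip u w) := by
  simp only [pip, trip_zero, trip_one, trip_two, trip_three, minor3]; ring

def detB (g w1 w2 m : R4) : ℝ :=
  ((-g 0) * (-w1 1) * (w2 2) * (m 3) - (-g 0) * (-w1 1) * (w2 3) * (m 2) - (-g 0) * (w1 2) * (-w2 1) * (m 3) + (-g 0) * (w1 2) * (w2 3) * (-m 1) + (-g 0) * (w1 3) * (-w2 1) * (m 2) - (-g 0) * (w1 3) * (w2 2) * (-m 1) - (-g 1) * (-w1 0) * (w2 2) * (m 3) + (-g 1) * (-w1 0) * (w2 3) * (m 2) + (-g 1) * (w1 2) * (-w2 0) * (m 3) - (-g 1) * (w1 2) * (w2 3) * (-m 0) - (-g 1) * (w1 3) * (-w2 0) * (m 2) + (-g 1) * (w1 3) * (w2 2) * (-m 0) + (g 2) * (-w1 0) * (-w2 1) * (m 3) - (g 2) * (-w1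 0) * (w2 3) * (-m 1) - (g 2) * (-w1 1) * (-w2 0) * (m 3) + (g 2) * (-w1 1) * (w2 3) * (-m 0) + (g 2) * (w1 3) * (-w2 0) * (-m 1) - (g 2) * (w1 3) * (-w2 1) * (-m 0) - (g 3) * (-w1 0) * (-w2 1) * (m 2) + (g 3) * (-w1 0) * (w2 2) * (-m 1) + (g 3) * (-w1 1) * (-w2 0) * (m 2) - (g 3) * (-w1 1) * (w2 2) * (-m 0) - (g 3) * (w1 2) * (-w2 0) * (-m 1) + (g 3) * (w1 2) * (-w2 1) * (-m 0))

set_option maxHeartbeats 1000000 in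
lemma detB_sq (g w1 w2 m : R4) :
    detB g w1 w2 m * detB g w1 w2 m =
        (pip g g) * (pip w1 w1) * (pip w2 w2) * (pip m m)
        - (pip g g) * (pip w1 w1) * (pip w2 m) * (pip w2 m)
        - (pip g g) * (pip w1 w2) * (pip w1 w2) * (pip m m)
        + (pip g g) * (pip w1 w2) * (pip w2 m) * (pip w1 m)
        + (pip g g) * (pip w1 m) * (pip w1 w2) * (pip w2 m)
        - (pip g g) * (pip w1 m) * (pip w2 w2) * (pip w1 m)
        - (pip g w1) * (pip g w1) * (pip w2 w2) * (pip m m)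
        + (pip g w1) * (pip g w1) * (pip w2 m) * (pip w2 m)
        + (pip g w1) * (pip w1 w2) * (pip g w2) * (pip m m)
        - (pip g w1) * (pip w1 w2) * (pip w2 m) * (pip g m)
        - (pip g w1) * (pip w1 m) * (pip g w2) * (pip w2 m)
        + (pip g w1) * (pip w1 m) * (pip w2 w2) * (pip g m)
        + (pip g w2) * (pip g w1) * (pip w1 w2) * (pip m m)
        - (pip g w2) * (pip g w1) * (pip w2 m) * (pip w1 m)
        - (pip g w2) * (pip w1 w1) * (pip g w2) * (pip m m)
        + (pip g w2) * (pip w1 w1) * (pip w2 m) * (pip g m)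
        + (pip g w2) * (pip w1 m) * (pip g w2) * (pip w1 m)
        - (pip g w2) * (pip w1 m) * (pip w1 w2) * (pip g m)
        - (pip g m) * (pip g w1) * (pip w1 w2) * (pip w2 m)
        + (pip g m) * (pip g w1) * (pip w2 w2) * (pip w1 m)
        + (pip g m) * (pip w1 w1) * (pip g w2) * (pip w2 m)
        - (pip g m) * (pip w1 w1) * (pip w2 w2) * (pip g m)
        - (pip g m) * (pip w1 w2) * (pip g w2) * (pip w1 m)
        + (pip g m) * (pip w1 w2) * (pip w1 w2) * (pip g m) := by
  simp only [detB, pip]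
  ring

set_option maxHeartbeats 1000000 in
/-- If `x` is `pip`-orthogonal to a pseudo-orthonormal frame, then `x = 0`. -/
lemma orth_all_zero (ε : ℝ) (hε2 : ε * ε = 1) (g w1 w2 m x : R4)
    (hgg : pip g g = -1) (h11 : pip w1 w1 = ε) (h22 : pip w2 w2 = -ε)
    (h12 : pip w1 w2 = 0) (hg1 : pip g w1 = 0) (hg2 : pip g w2 = 0)
    (hmm : pip m m = 1) (hmg : pip g m = 0) (hm1 : pip w1 m = 0)
    (hm2 : pip w2 m = 0)
    (hx0 : pip x g = 0) (hx1 : pip x w1 = 0) (hx2 : pip x w2 = 0)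
    (hx3 : pip x m = 0) : x = 0 := by
  have hsq : detB g w1 w2 m * detB g w1 w2 m = 1 := by
    rw [detB_sq, hgg, h11, h22, h12, hg1, hg2, hmm, hmg, hm1, hm2]
    linear_combination hε2
  have hDne : detB g w1 w2 m ≠ 0 := by
    intro h0; rw [h0] at hsq; norm_num at hsq
  simp only [pip] at hx0 hx1 hx2 hx3
  have hD0 : detB g w1 w2 m * x 0 = 0 := by
    simp only [detB]
    linear_combination ((-w1 1) * (w2 2) * (m 3) - (-w1 1) * (w2 3) * (m 2) - (w1 2) * (-w2 1) * (m 3) + (w1 2) * (w2 3) * (-m 1) + (w1 3) * (-w2 1) * (m 2) - (w1 3) * (w2 2) * (-m 1)) * hx0 - ((-g 1) * (w2 2) * (m 3) - (-g 1) * (w2 3) * (m 2) - (g 2) * (-w2 1) * (m 3) + (g 2) * (w2 3) * (-m 1) + (g 3) * (-w2 1) * (m 2) - (g 3) * (w2 2) * (-m 1)) * hx1 + ((-g 1) * (w1 2) * (m 3) - (-g 1) * (w1 3) * (m 2) - (g 2) * (-w1 1) * (m 3) + (g 2) * (w1 3) * (-m 1) + (g 3) * (-w1 1) * (m 2) - (g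 3) * (w1 2) * (-m 1)) * hx2 - ((-g 1) * (w1 2) * (w2 3) - (-g 1) * (w1 3) * (w2 2) - (g 2) * (-w1 1) * (w2 3) + (g 2) * (w1 3) * (-w2 1) + (g 3) * (-w1 1) * (w2 2) - (g 3) * (w1 2) * (-w2 1)) * hx3
  have hD1 : detB g w1 w2 m * x 1 = 0 := by
    simp only [detB]
    linear_combination - ((-w1 0) * (w2 2) * (m 3) - (-w1 0) * (w2 3) * (m 2) - (w1 2) * (-w2 0) * (m 3) + (w1 2) * (w2 3) * (-m 0) + (w1 3) * (-w2 0) * (m 2) - (w1 3) * (w2 2) * (-m 0)) * hx0 + ((-g 0) * (w2 2) * (m 3) - (-g 0) * (w2 3) * (m 2) - (g 2) * (-w2 0) * (m 3) + (g 2) * (w2 3) * (-m 0) + (g 3) * (-w2 0) * (m 2) - (g 3) * (w2 2) * (-m 0)) * hx1 - ((-g 0) * (w1 2) * (m 3) - (-g 0) * (w1 3) * (m 2) - (g 2) * (-w1 0) * (m 3) + (g 2) * (w1 3) * (-m 0) + (g 3) * (-w1 0) * (m 2) - (g 3) * (w1 2) * (-m 0)) * hx2 + ((-g 0) * (w1 2)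 * (w2 3) - (-g 0) * (w1 3) * (w2 2) - (g 2) * (-w1 0) * (w2 3) + (g 2) * (w1 3) * (-w2 0) + (g 3) * (-w1 0) * (w2 2) - (g 3) * (w1 2) * (-w2 0)) * hx3
  have hD2 : detB g w1 w2 m * x 2 = 0 := by
    simp only [detB]
    linear_combination ((-w1 0) * (-w2 1) * (m 3) - (-w1 0) * (w2 3) * (-m 1) - (-w1 1) * (-w2 0) * (m 3) + (-w1 1) * (w2 3) * (-m 0) + (w1 3) * (-w2 0) * (-m 1) - (w1 3) * (-w2 1) * (-m 0)) * hx0 - ((-g 0) * (-w2 1) * (m 3) - (-g 0) * (w2 3) * (-m 1) - (-g 1) * (-w2 0) * (m 3) + (-g 1) * (w2 3) * (-m 0) + (g 3) * (-w2 0) * (-m 1) - (g 3) * (-w2 1) * (-m 0)) * hx1 + ((-g 0) * (-w1 1) * (m 3) - (-g 0) * (w1 3) * (-m 1) - (-g 1) * (-w1 0) * (m 3) + (-g 1) * (w1 3) * (-m 0) + (g 3) * (-w1 0) * (-m 1) - (g 3) * (-w1 1) * (-m 0)) * hx2 - ((-g 0) * (-w1 1) * (w2 3) - (-g 0) * (w1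 3) * (-w2 1) - (-g 1) * (-w1 0) * (w2 3) + (-g 1) * (w1 3) * (-w2 0) + (g 3) * (-w1 0) * (-w2 1) - (g 3) * (-w1 1) * (-w2 0)) * hx3
  have hD3 : detB g w1 w2 m * x 3 = 0 := by
    simp only [detB]
    linear_combination - ((-w1 0) * (-w2 1) * (m 2) - (-w1 0) * (w2 2) * (-m 1) - (-w1 1) * (-w2 0) * (m 2) + (-w1 1) * (w2 2) * (-m 0) + (w1 2) * (-w2 0) * (-m 1) - (w1 2) * (-w2 1) * (-m 0)) * hx0 + ((-g 0) * (-w2 1) * (m 2) - (-g 0) * (w2 2) * (-m 1) - (-g 1) * (-w2 0) * (m 2) + (-g 1) * (w2 2) * (-m 0) + (g 2) * (-w2 0) * (-m 1) - (g 2) * (-w2 1) * (-m 0)) * hx1 - ((-g 0) * (-w1 1) * (m 2) - (-g 0) * (w1 2) * (-m 1) - (-g 1) * (-w1 0) * (m 2) + (-g 1) * (w1 2) * (-m 0) + (g 2) * (-w1 0) * (-m 1) - (g 2) * (-w1 1) * (-m 0)) * hx2 + ((-g 0) * (-w1 1) * (w2 2) - (-g 0) * (w1 2) * (-w2 1) -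 (-g 1) * (-w1 0) * (w2 2) + (-g 1) * (w1 2) * (-w2 0) + (g 2) * (-w1 0) * (-w2 1) - (g 2) * (-w1 1) * (-w2 0)) * hx3
  funext i
  fin_cases i
  · exact (mul_eq_zero.mp hD0).resolve_left hDne
  · exact (mul_eq_zero.mp hD1).resolve_left hDne
  · exact (mul_eq_zero.mp hD2).resolve_left hDne
  · exact (mul_eq_zero.mp hD3).resolve_left hDne

lemma hasDerivAt_pipquad (γ : ℝ → R4) (γ' v₀ : R4) (s₀ : ℝ)
    (hD : HasDerivAt γ γ' s₀) :
    HasDerivAt (fun s => pip (γ s - v₀) (γ s - v₀))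
      (2 * pip γ' (γ s₀ - v₀)) s₀ := by
  have hi : ∀ i, HasDerivAt (fun s => γ s i) (γ' i) s₀ := hasDerivAt_pi.mp hD
  have h0 := (hi 0).sub_const (v₀ 0)
  have h1 := (hi 1).sub_const (v₀ 1)
  have h2 := (hi 2).sub_const (v₀ 2)
  have h3 := (hi 3).sub_const (v₀ 3)
  have key := (((h0.mul h0).neg.sub (h1.mul h1)).add (h2.mul h2)).add (h3.mul h3)
  have hfun : (fun s => pip (γ s - v₀) (γ s - v₀)) =
      (fun s => -((γ s 0 - v₀ 0) * (γ s 0 - v₀ 0))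
        - (γ s 1 - v₀ 1) * (γ s 1 - v₀ 1)
        + (γ s 2 - v₀ 2) * (γ s 2 - v₀ 2)
        + (γ s 3 - v₀ 3) * (γ s 3 - v₀ 3)) := by
    funext s; simp only [pip, Pi.sub_apply]
  rw [hfun]
  refine key.congr_deriv ?_
  simp only [pip, Pi.sub_apply]; ring

lemma deriv_dSq_eq (I : Set ℝ) (hI : IsOpen I) (γ : ℝ → R4)
    (hγ : ContDiffOn ℝ (⊤ : ℕ∞) γ I) (v₀ : R4) (s₀ : ℝ) (hs₀ : s₀ ∈ I) :
    deriv (dSq γ v₀) s₀ = 2 * pip (deriv γ s₀) (γ s₀ - v₀) := by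
  have hD : HasDerivAt γ (deriv γ s₀) s₀ :=
    ((hγ.contDiffAt (hI.mem_nhds hs₀)).differentiableAt (by simp)).hasDerivAt
  have hq := hasDerivAt_pipquad γ (deriv γ s₀) v₀ s₀ hD
  have heq : dSq γ v₀ = fun s => pip (γ s - v₀) (γ s - v₀) := rfl
  rw [heq]
  exact hq.deriv

lemma pip_deriv_self (I : Set ℝ) (hI : IsOpen I) (γ : ℝ → R4)
    (hγ : ContDiffOn ℝ (⊤ : ℕ∞) γ I) (hads : ∀ s ∈ I, pip (γ s) (γ s) = -1)
    (s₀ : ℝ) (hs₀ : s₀ ∈ I) : pip (deriv γ s₀) (γ s₀) = 0 := by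
  have hD : HasDerivAt γ (deriv γ s₀) s₀ :=
    ((hγ.contDiffAt (hI.mem_nhds hs₀)).differentiableAt (by simp)).hasDerivAt
  have hq := hasDerivAt_pipquad γ (deriv γ s₀) 0 s₀ hD
  have hconst : (fun s => pip (γ s - 0) (γ s - 0)) =ᶠ[nhds s₀] fun _ => (-1 : ℝ) := by
    filter_upwards [hI.mem_nhds hs₀] with s hs
    simpa using hads s hs
  have h1 : deriv (fun s => pip (γ s - 0) (γ s - 0)) s₀ = 0 := by
    rw [hconst.deriv_eq]; exact deriv_const _ _
  have h2 := hq.deriv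
  rw [h1] at h2
  have h3 : pip (deriv γ s₀) (γ s₀ - 0) = 0 := by linarith
  simpa using h3

end AuxLemmas

set_option maxHeartbeats 2000000 in
/-- Proposition 5.1 (2): characterization of d_{v₀}(s₀) = d′_{v₀}(s₀) = 0. -/
theorem dist_squared_first_iff
    (I : Set ℝ) (hIopen : IsOpen I) (hIconn : I.OrdConnected)
    (γ v₁ v₂ : ℝ → R4) (ε : ℝ) (h : IsFramedCurve I γ v₁ v₂ ε)
    (v₀ : R4) (hv₀ : v₀ ∈ AdS3) (s₀ : ℝ) (hs₀ : s₀ ∈ I) :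
    (dSq γ v₀ s₀ = 0 ∧ deriv (dSq γ v₀) s₀ = 0) ↔
      ((∃ a b c : ℝ,
        v₀ = γ s₀ + a • v₁ s₀ + b • v₂ s₀ + c • muF γ v₁ v₂ s₀ ∧
        c ^ 2 = -ε * (a ^ 2 - b ^ 2)) ∧
        (curvA γ v₁ v₂ s₀ = 0 ∨
          ∃ lam : ℝ, v₀ = γ s₀ + lam • (v₁ s₀ + v₂ s₀) ∨
            v₀ = γ s₀ + lam • (v₁ s₀ - v₂ s₀))) := by
  have hε2 : ε * ε = 1 := by rcases h.eps with h' | h' <;> rw [h'] <;> norm_num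
  have hεne : ε ≠ 0 := by intro h0; rw [h0] at hε2; norm_num at hε2
  have Fγγ : pip (γ s₀) (γ s₀) = -1 := h.mem_ads s₀ hs₀
  have F11 := h.norm_v₁ s₀ hs₀
  have F22 := h.norm_v₂ s₀ hs₀
  have F12 := h.orth_v₁v₂ s₀ hs₀
  have Fγ1 := h.orth_γv₁ s₀ hs₀
  have Fγ2 := h.orth_γv₂ s₀ hs₀
  have T1 := h.tang_v₁ s₀ hs₀
  have T2 := h.tang_v₂ s₀ hs₀
  have F21 : pip (v₂ s₀) (v₁ s₀) = 0 := by rw [pip_comm]; exact F12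
  have F1γ : pip (v₁ s₀) (γ s₀) = 0 := by rw [pip_comm]; exact Fγ1
  have F2γ : pip (v₂ s₀) (γ s₀) = 0 := by rw [pip_comm]; exact Fγ2
  have T0 : pip (deriv γ s₀) (γ s₀) = 0 :=
    pip_deriv_self I hIopen γ h.smooth_γ (fun s hs => h.mem_ads s hs) s₀ hs₀
  have hv₀' : pip v₀ v₀ = -1 := hv₀
  have Fμγ : pip (muF γ v₁ v₂ s₀) (γ s₀) = 0 := pip_trip_fst _ _ _
  have Fμ1 : pip (muF γ v₁ v₂ s₀) (v₁ s₀) = 0 := pip_trip_snd _ _ _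
  have Fμ2 : pip (muF γ v₁ v₂ s₀) (v₂ s₀) = 0 := pip_trip_thd _ _ _
  have Fγμ : pip (γ s₀) (muF γ v₁ v₂ s₀) = 0 := by rw [pip_comm]; exact Fμγ
  have F1μ : pip (v₁ s₀) (muF γ v₁ v₂ s₀) = 0 := by rw [pip_comm]; exact Fμ1
  have F2μ : pip (v₂ s₀) (muF γ v₁ v₂ s₀) = 0 := by rw [pip_comm]; exact Fμ2
  have Fμμ : pip (muF γ v₁ v₂ s₀) (muF γ v₁ v₂ s₀) = 1 := by
    rw [show muF γ v₁ v₂ s₀ = trip (γ s₀) (v₁ s₀) (v₂ s₀) from rfl, pip_trip_self,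
      Fγγ, F11, F22, F12, Fγ1, Fγ2]
    linear_combination hε2
  have Tμ : pip (deriv γ s₀) (muF γ v₁ v₂ s₀) = curvA γ v₁ v₂ s₀ := rfl
  have hderiv : deriv (dSq γ v₀) s₀ = 2 * pip (deriv γ s₀) (γ s₀ - v₀) :=
    deriv_dSq_eq I hIopen γ h.smooth_γ v₀ s₀ hs₀
  constructor
  · rintro ⟨hd0, hd1⟩
    have hd0' : pip (γ s₀ - v₀) (γ s₀ - v₀) = 0 := hd0
    have hv₀γ : pip v₀ (γ s₀) = -1 := by
      have hx := hd0'
      simp only [pip_sub_left, pip_sub_right] at hx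
      have hcomm : pip (γ s₀) v₀ = pip v₀ (γ s₀) := pip_comm _ _
      linear_combination (-(1:ℝ)/2) * hx - (1/2 : ℝ) * hcomm + (1/2 : ℝ) * Fγγ
        + (1/2 : ℝ) * hv₀'
    set a := ε * pip v₀ (v₁ s₀) with ha
    set b := -ε * pip v₀ (v₂ s₀) with hb
    set c := pip v₀ (muF γ v₁ v₂ s₀) with hc
    have hexp : v₀ = γ s₀ + a • v₁ s₀ + b • v₂ s₀ + c • muF γ v₁ v₂ s₀ := by
      have hz := orth_all_zero ε hε2 (γ s₀) (v₁ s₀) (v₂ s₀) (muF γ v₁ v₂ s₀)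
        (v₀ - (γ s₀ + a • v₁ s₀ + b • v₂ s₀ + c • muF γ v₁ v₂ s₀))
        Fγγ F11 F22 F12 Fγ1 Fγ2 Fμμ Fγμ F1μ F2μ ?_ ?_ ?_ ?_
      · rw [sub_eq_zero] at hz; exact hz
      · simp only [pip_sub_left, pip_add_left, pip_smul_left]
        linear_combination hv₀γ - Fγγ - a * F1γ - b * F2γ - c * Fμγ
      · simp only [pip_sub_left, pip_add_left, pip_smul_left]
        linear_combination -Fγ1 - a * F11 - b * F21 - c * Fμ1 - ε * ha
          - pip v₀ (v₁ s₀) * hε2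
      · simp only [pip_sub_left, pip_add_left, pip_smul_left]
        linear_combination -Fγ2 - a * F12 - b * F22 - c * Fμ2 + ε * hb
          - pip v₀ (v₂ s₀) * hε2
      · simp only [pip_sub_left, pip_add_left, pip_smul_left]
        linear_combination -Fγμ - a * F1μ - b * F2μ - c * Fμμ - hc
    have hsub : γ s₀ - v₀ = -(a • v₁ s₀ + b • v₂ s₀ + c • muF γ v₁ v₂ s₀) := by
      rw [hexp]; module
    have hc2 : c ^ 2 = -ε * (a ^ 2 - b ^ 2) := by
      have h0x := hd0'
      rw [hsub] at h0x
      simp only [pip_neg_left, pip_neg_right, pip_add_left, pip_add_right,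
        pip_smul_left, pip_smul_right, neg_neg] at h0x
      linear_combination h0x - a ^ 2 * F11 - a * b * F12 - a * c * F1μ
        - a * b * F21 - b ^ 2 * F22 - b * c * F2μ - a * c * Fμ1 - b * c * Fμ2
        - c ^ 2 * Fμμ
    have hcα : c * curvA γ v₁ v₂ s₀ = 0 := by
      have h1x : 2 * pip (deriv γ s₀) (γ s₀ - v₀) = 0 := by rw [← hderiv]; exact hd1
      rw [hsub] at h1x
      simp only [pip_neg_right, pip_add_right, pip_smul_right] at h1x
      linear_combination (-(1:ℝ)/2) * h1x - a * T1 - b * T2 - c * Tμ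
    refine ⟨⟨a, b, c, hexp, hc2⟩, ?_⟩
    by_cases hα : curvA γ v₁ v₂ s₀ = 0
    · exact Or.inl hα
    · right
      have hc0 : c = 0 := by
        rcases mul_eq_zero.mp hcα with h' | h'
        · exact h'
        · exact absurd h' hα
      have hab : a * a = b * b := by
        rw [hc0] at hc2
        have h4 : -ε * (a ^ 2 - b ^ 2) = 0 := by linarith [hc2]
        rcases mul_eq_zero.mp h4 with h' | h'
        · exact absurd (neg_eq_zero.mp h') hεne
        · nlinarith [h']
      rcases mul_self_eq_mul_self_iff.mp hab with h' | h'
      · refine ⟨a, Or.inl ?_⟩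
        rw [hexp, hc0, ← h']; module
      · refine ⟨a, Or.inr ?_⟩
        rw [hexp, hc0, h']; module
  · rintro ⟨⟨a, b, c, hexp, hc2⟩, hor⟩
    have hsub : γ s₀ - v₀ = -(a • v₁ s₀ + b • v₂ s₀ + c • muF γ v₁ v₂ s₀) := by
      rw [hexp]; module
    have hd0 : dSq γ v₀ s₀ = 0 := by
      show pip (γ s₀ - v₀) (γ s₀ - v₀) = 0
      rw [hsub]
      simp only [pip_neg_left, pip_neg_right, pip_add_left, pip_add_right,
        pip_smul_left, pip_smul_right, neg_neg]
      linear_combination a ^ 2 * F11 + a * b * F12 + a * c * F1μ + a * b * F21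
        + b ^ 2 * F22 + b * c * F2μ + a * c * Fμ1 + b * c * Fμ2
        + c ^ 2 * Fμμ + hc2
    refine ⟨hd0, ?_⟩
    rw [hderiv]
    rcases hor with hα | ⟨lam, hl | hl⟩
    · rw [hsub]
      simp only [pip_neg_right, pip_add_right, pip_smul_right]
      rw [T1, T2, Tμ, hα]; ring
    · have hsub2 : γ s₀ - v₀ = -(lam • (v₁ s₀ + v₂ s₀)) := by rw [hl]; module
      rw [hsub2]
      simp only [pip_neg_right, pip_smul_right, pip_add_right]
      rw [T1, T2]; ring
    · have hsub2 : γ s₀ - v₀ = -(lam • (v₁ s₀ - v₂ s₀)) := by rw [hl]; module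
      rw [hsub2]
      simp only [pip_neg_right, pip_smul_right, pip_sub_right]
      rw [T1, T2]; ring
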